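/- In the balanced two-class Gaussian model with model f(x) = σ(wᵀx), the rescaled weight vector w_s = s·w with s = ⟨w,w*⟩_Σ / ||w||_Σ² yields zero calibration error: σ(w_sᵀ x) = P(Y=1 | w_sᵀX = w_sᵀx) for almost every x, i.e., the rescaled model is calibrated, while its refinement error equals that of w. -/

import Mathlib

open Matrix MeasureTheory ProbabilityTheory

noncomputable section

/-- The sigmoid function. -/
def sigmoid (t : ℝ) : ℝ := 1 / (1 + Real.exp (-t))

/-- The refinement error `R_ℓ(f) = E[e_ℓ(E[Y | f(X)])]` of the linear sigmoid model
`f(x) = σ(wᵀx)`, written with `E[Y | f(X)] = E[1_{Y=1} | wᵀX]`. -/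
def refR {p : ℕ} {Ω : Type*} [MeasurableSpace Ω] (μ : Measure Ω)
    (X : Ω → Fin p → ℝ) (Y : Ω → ℝ) (eℓ : ℝ → ℝ) (w : Fin p → ℝ) : ℝ :=
  ∫ ω, eℓ (MeasureTheory.condExp
    (MeasurableSpace.comap (fun ω' => w ⬝ᵥ X ω') inferInstance) μ
    (fun ω' => if Y ω' = 1 then (1 : ℝ) else 0) ω) ∂μ

/-!
If the class-conditional laws of a score `Z` are `N(a, v)` and `N(-a, v)` with equal priors,
their density ratio is `exp (2 a z / v)`, so Bayes' rule gives `P(Y = 1 | Z) = σ(c Z)` with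
`c v = 2 a`. For `Z = (s • w)ᵀX` one has `a = s ⟨w, μ⟩` and `v = s² ‖w‖²_Σ`, so `c = 1` exactly for
`s = 2 ⟨w, μ⟩ / ‖w‖²_Σ = ⟨w, w*⟩_Σ / ‖w‖²_Σ`. For `s ≠ 0` the scores `(s • w)ᵀX` and `wᵀX`
generate the same σ-algebra, so the refinement error is unchanged; for `s = 0` we have
`⟨w, μ⟩ = 0` and both conditional expectations are the constant `σ 0 = 1/2`.
-/

open scoped NNReal ENNReal

lemma sigmoid_eq_real_sigmoid : sigmoid = Real.sigmoid := by
  funext t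
  rw [sigmoid, Real.sigmoid_def, one_div]

lemma norm_sigmoid_le_one (t : ℝ) : ‖sigmoid t‖ ≤ 1 := by
  rw [sigmoid_eq_real_sigmoid, Real.norm_of_nonneg (Real.sigmoid_nonneg t)]
  exact Real.sigmoid_le_one t

lemma measurable_sigmoid : Measurable sigmoid := by
  rw [sigmoid_eq_real_sigmoid]
  exact continuous_sigmoid.measurable

lemma integrable_sigmoid_comp {α : Type*} [MeasurableSpace α] {ν : Measure α}
    [IsFiniteMeasure ν] {f : α → ℝ} (hf : Measurable f) :
    Integrable (fun x => sigmoid (f x)) ν :=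
  .of_bound (measurable_sigmoid.comp hf).aestronglyMeasurable 1
    (ae_of_all _ fun _ => norm_sigmoid_le_one _)

lemma gaussianPDFReal_neg_eq_mul_exp {a c : ℝ} {v : ℝ≥0} (hv : v ≠ 0) (hc : c * v = 2 * a)
    (z : ℝ) :
    gaussianPDFReal (-a) v z = gaussianPDFReal a v z * Real.exp (-(c * z)) := by
  have hv' : (v : ℝ) ≠ 0 := by exact_mod_cast hv
  rw [gaussianPDFReal, gaussianPDFReal, mul_assoc (_⁻¹), ← Real.exp_add]
  congr 2
  field_simp
  linear_combination (2 * z) * hc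

lemma sigmoid_mul_gaussianPDFReal_add {a c : ℝ} {v : ℝ≥0} (hv : v ≠ 0) (hc : c * v = 2 * a)
    (z : ℝ) :
    sigmoid (c * z) * (gaussianPDFReal a v z + gaussianPDFReal (-a) v z)
      = gaussianPDFReal a v z := by
  rw [gaussianPDFReal_neg_eq_mul_exp hv hc, sigmoid]
  field_simp

lemma setIntegral_sigmoid_gaussianReal_add {a c : ℝ} {v : ℝ≥0} (hc : c * v = 2 * a)
    {A : Set ℝ} (hA : MeasurableSet A) :
    ∫ z in A, sigmoid (c * z) ∂(gaussianReal a v + gaussianReal (-a) v)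
      = (gaussianReal a v).real A := by
  classical
  have hmeas : Measurable fun z => sigmoid (c * z) :=
    measurable_sigmoid.comp (measurable_const_mul c)
  have hint (b : ℝ) : Integrable (fun z => sigmoid (c * z)) (gaussianReal b v) :=
    integrable_sigmoid_comp (measurable_const_mul c)
  rw [Measure.restrict_add, integral_add_measure (hint a).restrict (hint (-a)).restrict]
  rcases eq_or_ne v 0 with rfl | hv
  · obtain rfl : a = 0 := by simpa using hc.symm
    simp only [gaussianReal_zero_var, neg_zero, setIntegral_dirac]
    by_cases h0 : (0 : ℝ) ∈ A <;> norm_num [h0, measureReal_def, sigmoid]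
  · have hpdf (b : ℝ) : Integrable
        (fun z => gaussianPDFReal b v z • A.indicator (fun z => sigmoid (c * z)) z) :=
      (integrable_gaussianPDFReal b v).mul_bdd (hmeas.indicator hA).aestronglyMeasurable
        (ae_of_all _ fun z => (norm_indicator_le_norm_self _ z).trans (norm_sigmoid_le_one _))
    rw [← integral_indicator hA, ← integral_indicator hA,
      integral_gaussianReal_eq_integral_smul hv, integral_gaussianReal_eq_integral_smul hv,
      ← integral_add (hpdf a) (hpdf (-a)), measureReal_def, gaussianReal_apply_eq_integral _ hv,
      ENNReal.toReal_ofReal (setIntegral_nonneg hA fun z _ => gaussianPDFReal_nonneg a v z),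
      ← integral_indicator hA]
    congr 1 with z
    by_cases hz : z ∈ A
    · simp only [smul_eq_mul, Set.indicator_of_mem hz]
      rw [← add_mul, mul_comm, sigmoid_mul_gaussianPDFReal_add hv hc]
    · simp [hz]

section Mixture

variable {Ω : Type*} [MeasurableSpace Ω] {μ : Measure Ω}

lemma measure_smul_cond [IsFiniteMeasure μ] (s : Set Ω) : μ s • μ[|s] = μ.restrict s := by
  rcases eq_or_ne (μ s) 0 with hs | hs
  · rw [hs, zero_smul, eq_comm, Measure.restrict_eq_zero, hs]
  · rw [ProbabilityTheory.cond, smul_smul, ENNReal.mul_inv_cancel hs (measure_ne_top μ s),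
      one_smul]

lemma map_eq_measure_smul_map_cond_add [IsFiniteMeasure μ] {B B' : Set Ω}
    (hB' : MeasurableSet B') (hdisj : Disjoint B B') (hcover : μ (B ∪ B')ᶜ = 0)
    {Z : Ω → ℝ} (hZ : Measurable Z) :
    μ.map Z = μ B • (μ[|B]).map Z + μ B' • (μ[|B']).map Z := by
  rw [← Measure.map_smul, ← Measure.map_smul, ← Measure.map_add _ _ hZ, measure_smul_cond,
    measure_smul_cond, ← Measure.restrict_union hdisj hB',
    Measure.restrict_eq_self_of_ae_mem (s := B ∪ B') (mem_ae_iff.mpr hcover)]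

theorem condExp_indicator_eq_sigmoid [IsProbabilityMeasure μ] {B B' : Set Ω}
    (hB : MeasurableSet B) (hB' : MeasurableSet B') (hdisj : Disjoint B B')
    (hμB : μ B = 1 / 2) (hμB' : μ B' = 1 / 2) {Z : Ω → ℝ} (hZ : Measurable Z)
    {a c : ℝ} {v : ℝ≥0} (hBZ : (μ[|B]).map Z = gaussianReal a v)
    (hB'Z : (μ[|B']).map Z = gaussianReal (-a) v) (hc : c * v = 2 * a) :
    (fun ω => sigmoid (c * Z ω)) =ᵐ[μ]
      μ[B.indicator 1 | MeasurableSpace.comap Z inferInstance] := by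
  have hcover : μ (B ∪ B')ᶜ = 0 := by
    rw [measure_compl (hB.union hB') (measure_ne_top _ _), measure_union hdisj hB', hμB, hμB',
      ENNReal.add_halves, measure_univ, tsub_self]
  have hmap : μ.map Z = (1 / 2 : ℝ≥0∞) • (gaussianReal a v + gaussianReal (-a) v) := by
    rw [map_eq_measure_smul_map_cond_add hB' hdisj hcover hZ, hμB, hμB', hBZ, hB'Z, smul_add]
  have hsig : Measurable fun z => sigmoid (c * z) :=
    measurable_sigmoid.comp (measurable_const_mul c)
  refine ae_eq_condExp_of_forall_setIntegral_eq hZ.comap_le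
    ((integrable_const 1).indicator hB)
    (fun s _ _ => (integrable_sigmoid_comp (hZ.const_mul c)).integrableOn) ?_
    (hsig.comp (comap_measurable Z)).aestronglyMeasurable
  rintro _ ⟨A, hA, rfl⟩ -
  calc ∫ ω in Z ⁻¹' A, sigmoid (c * Z ω) ∂μ
      = ∫ z in A, sigmoid (c * z) ∂(μ.map Z) :=
        (setIntegral_map hA hsig.aestronglyMeasurable hZ.aemeasurable).symm
    _ = 1 / 2 * (gaussianReal a v).real A := by
        rw [hmap, Measure.restrict_smul, integral_smul_measure,
          setIntegral_sigmoid_gaussianReal_add hc hA]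
        norm_num
    _ = μ.real (B ∩ Z ⁻¹' A) := by
        rw [measureReal_def, measureReal_def, ← cond_mul_eq_inter hB, ← hBZ,
          Measure.map_apply hZ hA, ENNReal.toReal_mul, hμB, mul_comm]
        norm_num
    _ = ∫ ω in Z ⁻¹' A, B.indicator 1 ω ∂μ := by
        rw [setIntegral_indicator hB, Set.inter_comm]
        simp

theorem condExp_eq_sigmoid_of_balanced_labels [IsProbabilityMeasure μ] {Y : Ω → ℝ}
    (hY : Measurable Y) (hY1 : μ {ω | Y ω = 1} = 1 / 2) (hYm1 : μ {ω | Y ω = -1} = 1 / 2)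
    {Z : Ω → ℝ} (hZ : Measurable Z) {a q c : ℝ} (hq : 0 ≤ q)
    (hpos : (μ[|{ω | Y ω = 1}]).map Z = gaussianReal a q.toNNReal)
    (hneg : (μ[|{ω | Y ω = -1}]).map Z = gaussianReal (-a) q.toNNReal) (hc : c * q = 2 * a) :
    (fun ω => sigmoid (c * Z ω)) =ᵐ[μ]
      μ[fun ω => if Y ω = 1 then (1 : ℝ) else 0 | MeasurableSpace.comap Z inferInstance] := by
  have hlabel : {ω | Y ω = 1}.indicator 1 = fun ω => if Y ω = 1 then (1 : ℝ) else 0 := by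
    ext ω
    simp [Set.indicator_apply]
  have hdisj : Disjoint {ω | Y ω = 1} {ω | Y ω = -1} :=
    Set.disjoint_left.mpr fun ω (h1 : Y ω = 1) (h2 : Y ω = -1) => by norm_num [h1] at h2
  rw [← hlabel]
  exact condExp_indicator_eq_sigmoid (hY (measurableSet_singleton 1))
    (hY (measurableSet_singleton (-1))) hdisj hY1 hYm1 hZ hpos hneg
    (by rwa [Real.coe_toNNReal q hq])

end Mixture

lemma comap_const_mul {Ω : Type*} {c : ℝ} (hc : c ≠ 0) (Z : Ω → ℝ) :
    MeasurableSpace.comap (fun ω => c * Z ω) inferInstance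
      = MeasurableSpace.comap Z inferInstance := by
  conv_rhs => rw [← (MeasurableEquiv.mulLeft₀ c hc).measurableEmbedding.comap_eq,
    MeasurableSpace.comap_comp]
  rfl

theorem stmt15_general {p : ℕ} {Ω : Type*} [MeasurableSpace Ω] {μ : Measure Ω}
    [IsProbabilityMeasure μ]
    (S : Matrix (Fin p) (Fin p) ℝ) (hS : S.PosDef) (μv : Fin p → ℝ)
    (X : Ω → Fin p → ℝ) (Y : Ω → ℝ) (hX : Measurable X) (hY : Measurable Y)
    (hY1 : μ {ω | Y ω = 1} = 1 / 2) (hYm1 : μ {ω | Y ω = -1} = 1 / 2)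
    (hpos : ∀ u : Fin p → ℝ, Measure.map (fun ω => u ⬝ᵥ X ω) (μ[|{ω | Y ω = 1}])
      = gaussianReal (u ⬝ᵥ μv) (Real.toNNReal (u ⬝ᵥ S.mulVec u)))
    (hneg : ∀ u : Fin p → ℝ, Measure.map (fun ω => u ⬝ᵥ X ω) (μ[|{ω | Y ω = -1}])
      = gaussianReal (-(u ⬝ᵥ μv)) (Real.toNNReal (u ⬝ᵥ S.mulVec u)))
    (eℓ : ℝ → ℝ)
    (w : Fin p → ℝ) :
    (∀ᵐ ω ∂μ,
        sigmoid ((((w ⬝ᵥ S.mulVec ((2 : ℝ) • S⁻¹.mulVec μv)) / (w ⬝ᵥ S.mulVec w)) • w)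
            ⬝ᵥ X ω)
          = MeasureTheory.condExp
              (MeasurableSpace.comap
                (fun ω' =>
                  (((w ⬝ᵥ S.mulVec ((2 : ℝ) • S⁻¹.mulVec μv)) / (w ⬝ᵥ S.mulVec w)) • w)
                    ⬝ᵥ X ω') inferInstance) μ
              (fun ω' => if Y ω' = 1 then (1 : ℝ) else 0) ω)
      ∧ refR μ X Y eℓ
          (((w ⬝ᵥ S.mulVec ((2 : ℝ) • S⁻¹.mulVec μv)) / (w ⬝ᵥ S.mulVec w)) • w)
        = refR μ X Y eℓ w := by
  set m := w ⬝ᵥ μv with hm_def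
  set q := w ⬝ᵥ S *ᵥ w
  have hwstar : w ⬝ᵥ S *ᵥ ((2 : ℝ) • S⁻¹ *ᵥ μv) = 2 * m := by
    rw [mulVec_smul, mulVec_mulVec, mul_nonsing_inv _ ((isUnit_iff_isUnit_det S).mp hS.isUnit),
      one_mulVec, dotProduct_smul, smul_eq_mul]
  rw [hwstar]
  set s := 2 * m / q
  have hcal (u : Fin p → ℝ) (c : ℝ) (hc : c * (u ⬝ᵥ S *ᵥ u) = 2 * (u ⬝ᵥ μv)) :
      (fun ω => sigmoid (c * (u ⬝ᵥ X ω))) =ᵐ[μ] μ[fun ω => if Y ω = 1 then (1 : ℝ) else 0 |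
        MeasurableSpace.comap (fun ω => u ⬝ᵥ X ω) inferInstance] :=
    condExp_eq_sigmoid_of_balanced_labels hY hY1 hYm1
      ((continuous_const.dotProduct continuous_id).measurable.comp hX)
      (hS.posSemidef.dotProduct_mulVec_nonneg u) (hpos u) (hneg u) hc
  have hquad : (s • w) ⬝ᵥ S *ᵥ (s • w) = s * s * q := by
    simp only [smul_dotProduct, mulVec_smul, dotProduct_smul, smul_eq_mul, q]; ring
  have hmean : (s • w) ⬝ᵥ μv = s * m := by simp only [smul_dotProduct, smul_eq_mul, m]
  refine ⟨?_, ?_⟩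
  · have hsq : s * s * q = 2 * (s * m) := by
      rcases eq_or_ne q 0 with hq | hq
      · simp [s, hq] -- here `s = 2 * m / 0 = 0`
      · simp only [s]; field_simp
    filter_upwards [hcal (s • w) 1 (by rw [one_mul, hquad, hmean, hsq])] with ω h
    rwa [one_mul] at h
  · unfold refR
    by_cases hm : m = 0
    · refine integral_congr_ae ?_
      filter_upwards [hcal (s • w) 0 (by simp [hmean, hm]),
        hcal w 0 (by rw [← hm_def, hm]; ring)] with ω h1 h2
      rw [← h1, ← h2, zero_mul, zero_mul]
    · have hq : q ≠ 0 := (hS.dotProduct_mulVec_pos (x := w) (by rintro rfl; simp [m] at hm)).ne'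
      simp_rw [smul_dotProduct, smul_eq_mul]
      rw [comap_const_mul (div_ne_zero (mul_ne_zero two_ne_zero hm) hq)]

/-- In the balanced two-class Gaussian model, the rescaled weight vector
`w_s = (⟨w,w*⟩_Σ / ‖w‖_Σ²) • w` is calibrated: `σ(w_sᵀX) = P(Y=1 | w_sᵀX)` a.s.
(so its calibration error vanishes), while its refinement error equals that of `w`. -/
theorem stmt15 {p : ℕ} {Ω : Type*} [MeasurableSpace Ω] {μ : Measure Ω}
    [IsProbabilityMeasure μ]
    (S : Matrix (Fin p) (Fin p) ℝ) (hS : S.PosDef) (μv : Fin p → ℝ)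
    (X : Ω → Fin p → ℝ) (Y : Ω → ℝ) (hX : Measurable X) (hY : Measurable Y)
    (hY1 : μ {ω | Y ω = 1} = 1 / 2) (hYm1 : μ {ω | Y ω = -1} = 1 / 2)
    (hpos : ∀ u : Fin p → ℝ, Measure.map (fun ω => u ⬝ᵥ X ω) (μ[|{ω | Y ω = 1}])
      = gaussianReal (u ⬝ᵥ μv) (Real.toNNReal (u ⬝ᵥ S.mulVec u)))
    (hneg : ∀ u : Fin p → ℝ, Measure.map (fun ω => u ⬝ᵥ X ω) (μ[|{ω | Y ω = -1}])
      = gaussianReal (-(u ⬝ᵥ μv)) (Real.toNNReal (u ⬝ᵥ S.mulVec u)))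
    (eℓ : ℝ → ℝ) (heℓ_meas : Measurable eℓ)
    (w : Fin p → ℝ) (hw : w ≠ 0) :
    (∀ᵐ ω ∂μ,
        sigmoid ((((w ⬝ᵥ S.mulVec ((2 : ℝ) • S⁻¹.mulVec μv)) / (w ⬝ᵥ S.mulVec w)) • w)
            ⬝ᵥ X ω)
          = MeasureTheory.condExp
              (MeasurableSpace.comap
                (fun ω' =>
                  (((w ⬝ᵥ S.mulVec ((2 : ℝ) • S⁻¹.mulVec μv)) / (w ⬝ᵥ S.mulVec w)) • w)
                    ⬝ᵥ X ω') inferInstance) μ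
              (fun ω' => if Y ω' = 1 then (1 : ℝ) else 0) ω)
      ∧ refR μ X Y eℓ
          (((w ⬝ᵥ S.mulVec ((2 : ℝ) • S⁻¹.mulVec μv)) / (w ⬝ᵥ S.mulVec w)) • w)
        = refR μ X Y eℓ w :=
  stmt15_general S hS μv X Y hX hY hY1 hYm1 hpos hneg eℓ w
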